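/- Type preservation of the CPS transformation: if x₁:σ₁,…,xₙ:σₙ ⊢ M : τ is derivable in the call-by-value λ□-calculus, then x₁:⟦σ₁⟧,…,xₙ:⟦σₙ⟧ ⊢ ⟦M⟧ : (⟦τ⟧⊃R)⊃R is derivable in the call-by-name λ□-calculus. -/

import Mathlib

namespace LamBox

inductive Ty : Type
  | base : ℕ → Ty
  | arr : Ty → Ty → Ty
  | box : Ty → Ty
  deriving DecidableEq

inductive Tm : Type
  | const : ℕ → Tm
  | var : ℕ → Tm
  | lam : ℕ → Tm → Tm
  | app : Tm → Tm → Tm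
  | box : List ℕ → List Tm → Tm → Tm

mutual
  def fv : Tm → Finset ℕ
    | .const _ => ∅
    | .var x => {x}
    | .lam x M => fv M \ {x}
    | .app M N => fv M ∪ fv N
    | .box _ Ns _ => fvList Ns
  def fvList : List Tm → Finset ℕ
    | [] => ∅
    | N :: Ns => fv N ∪ fvList Ns
end

mutual
  def subst (x : ℕ) (P : Tm) : Tm → Tm
    | .const c => .const c
    | .var y => if y = x then P else .var y
    | .lam y M => if y = x then .lam y M else .lam y (subst x P M)
    | .app M N => .app (subst x P M) (subst x P N)
    | .box xs Ns M => .box xs (substList x P Ns) M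
  def substList (x : ℕ) (P : Tm) : List Tm → List Tm
    | [] => []
    | N :: Ns => subst x P N :: substList x P Ns
end

abbrev Ctx := List (ℕ × Ty)

inductive Lookup : Ctx → ℕ → Ty → Prop
  | here {Γ x τ} : Lookup ((x, τ) :: Γ) x τ
  | there {Γ x τ y σ} : x ≠ y → Lookup Γ x τ → Lookup ((y, σ) :: Γ) x τ

inductive HasType (ct : ℕ → Ty) : Ctx → Tm → Ty → Prop
  | const {Γ c} : HasType ct Γ (.const c) (ct c)
  | var {Γ x τ} : Lookup Γ x τ → HasType ct Γ (.var x) τ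
  | lam {Γ x σ M τ} : HasType ct ((x, σ) :: Γ) M τ →
      HasType ct Γ (.lam x M) (.arr σ τ)
  | app {Γ M N σ τ} : HasType ct Γ M (.arr σ τ) → HasType ct Γ N σ →
      HasType ct Γ (.app M N) τ
  | box {Γ} {xs : List ℕ} {σs : List Ty} {Ns : List Tm} {M τ} :
      xs.length = σs.length →
      HasType ct ((xs.zip σs).reverse) M τ →
      Ns.length = σs.length →
      (∀ i (hN : i < Ns.length) (hσ : i < σs.length),
        HasType ct Γ (Ns.get ⟨i, hN⟩) (.box (σs.get ⟨i, hσ⟩))) →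
      HasType ct Γ (.box xs Ns M) (.box τ)

inductive StepN : Tm → Tm → Prop
  | beta {x M N} : StepN (.app (.lam x M) N) (subst x N M)
  | eta {x M} : x ∉ fv M → StepN (.lam x (.app M (.var x))) M
  | idBox {x M} : StepN (.box [x] [M] (.var x)) M
  | betaBox {ws zs : List ℕ} {x : ℕ} {Ps Qs Ls : List Tm} {ys : List ℕ} {N M : Tm} :
      ws.length = Ps.length →
      StepN (.box (ws ++ x :: zs) (Ps ++ (Tm.box ys Ls N) :: Qs) M)
            (.box (ws ++ ys ++ zs) (Ps ++ Ls ++ Qs) (subst x N M))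
  | appL {M M' N} : StepN M M' → StepN (.app M N) (.app M' N)
  | appR {M N N'} : StepN N N' → StepN (.app M N) (.app M N')
  | lam {x M M'} : StepN M M' → StepN (.lam x M) (.lam x M')
  | boxArg {xs : List ℕ} {Ps Qs : List Tm} {N N' M} : StepN N N' →
      StepN (.box xs (Ps ++ N :: Qs) M) (.box xs (Ps ++ N' :: Qs) M)
  | boxBody {xs : List ℕ} {Ns : List Tm} {M M'} : StepN M M' →
      StepN (.box xs Ns M) (.box xs Ns M')


/-- Values of the call-by-value λ□-calculus. -/
inductive IsValue : Tm → Prop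
  | const (c) : IsValue (.const c)
  | var (x) : IsValue (.var x)
  | lam (x M) : IsValue (.lam x M)
  | box {xs : List ℕ} {Vs : List Tm} {M} : (∀ V ∈ Vs, IsValue V) →
      IsValue (.box xs Vs M)

/-- Simple evaluation contexts `C ::= −M | V− | box x⃗ be V⃗,−,M⃗ in M`. -/
inductive SCtx : Type
  | appL : Tm → SCtx
  | appR : Tm → SCtx
  | box : List ℕ → List Tm → List Tm → Tm → SCtx

/-- Filling the hole of a simple evaluation context. -/
def fillS : SCtx → Tm → Tm
  | .appL M, h => .app h M
  | .appR V, h => .app V h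
  | .box xs Vs Ms M, h => .box xs (Vs ++ h :: Ms) M

/-- Well-formedness of a simple evaluation context (the parts required to be
values are values). -/
def GoodS : SCtx → Prop
  | .appL _ => True
  | .appR V => IsValue V
  | .box _ Vs _ _ => ∀ V ∈ Vs, IsValue V

/-- Free variables of a simple evaluation context. -/
def fvS : SCtx → Finset ℕ
  | .appL M => fv M
  | .appR V => fv V
  | .box _ Vs Ms _ => fvList Vs ∪ fvList Ms

/-- Evaluation contexts `E ::= − | C[E]`, as lists of simple contexts. -/
abbrev ECtx := List SCtx

/-- Filling the hole of an evaluation context. -/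
def fillE : ECtx → Tm → Tm
  | [], h => h
  | C :: E, h => fillS C (fillE E h)

def GoodE (E : ECtx) : Prop := ∀ C ∈ E, GoodS C

/-- The call-by-value reduction `→v` (compatible closure). -/
inductive StepV : Tm → Tm → Prop
  | idArr {x M} : StepV (.app (.lam x (.var x)) M) M
  | betaV {x M V} : IsValue V → StepV (.app (.lam x M) V) (subst x V M)
  | etaV {x V} : IsValue V → x ∉ fv V → StepV (.lam x (.app V (.var x))) V
  | lift {C x M N} : GoodS C → x ∉ fvS C →
      StepV (fillS C (.app (.lam x M) N)) (.app (.lam x (fillS C M)) N)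
  | flat {C y M x} : GoodS C → (∀ V, C ≠ .appR V) → x ∉ fvS C → x ≠ y →
      StepV (fillS C (.app (.var y) M))
            (.app (.lam x (fillS C (.var x))) (.app (.var y) M))
  | betaOmega {E : ECtx} {x y M} : GoodE E → x ∉ fv (fillE E (.var y)) →
      StepV (.app (.lam x (fillE E (.app (.var y) (.var x)))) M)
            (fillE E (.app (.var y) M))
  | idBox {x M} : StepV (.box [x] [M] (.var x)) M
  | betaBoxV {ws zs : List ℕ} {x : ℕ} {Ws Ps Ns : List Tm} {ys : List ℕ} {V M} :
      ws.length = Ws.length → (∀ W ∈ Ws, IsValue W) → IsValue V →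
      StepV (.box (ws ++ x :: zs) (Ws ++ (Tm.box ys Ns V) :: Ps) M)
            (.box (ws ++ ys ++ zs) (Ws ++ Ns ++ Ps) (subst x V M))
  | appL {M M' N} : StepV M M' → StepV (.app M N) (.app M' N)
  | appR {M N N'} : StepV N N' → StepV (.app M N) (.app M N')
  | lam {x M M'} : StepV M M' → StepV (.lam x M) (.lam x M')
  | boxArg {xs : List ℕ} {Ps Qs : List Tm} {N N' M} : StepV N N' →
      StepV (.box xs (Ps ++ N :: Qs) M) (.box xs (Ps ++ N' :: Qs) M)
  | boxBody {xs : List ℕ} {Ns : List Tm} {M M'} : StepV M M' →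
      StepV (.box xs Ns M) (.box xs Ns M')

/-- The restriction of the call-by-value calculus: every box subterm has the
form `box x⃗ be M⃗ in V` with `V` a value. -/
inductive Restricted : Tm → Prop
  | const (c) : Restricted (.const c)
  | var (x) : Restricted (.var x)
  | lam {x M} : Restricted M → Restricted (.lam x M)
  | app {M N} : Restricted M → Restricted N → Restricted (.app M N)
  | box {xs : List ℕ} {Ns : List Tm} {M} : (∀ N ∈ Ns, Restricted N) →
      Restricted M → IsValue M → Restricted (.box xs Ns M)

/-- A variable not occurring in the given finite set (all `fresh s + j` avoid `s`). -/
def fresh (s : Finset ℕ) : ℕ := (s.sup id) + 1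

/-- `appCont [N₁,…,Nₙ] [x₁,…,xₙ] B = N₁(λx₁.⋯ Nₙ(λxₙ. B)⋯)`. -/
def appCont : List Tm → List ℕ → Tm → Tm
  | [], _, body => body
  | _ :: _, [], body => body
  | N :: Ns, x :: xs, body => .app N (.lam x (appCont Ns xs body))

/-- The CPS transformation on types: `⟦σ⊃τ⟧ = (⟦τ⟧⊃R)⊃⟦σ⟧⊃R`, `⟦□σ⟧ = □⟦σ⟧`,
where `R` is the fixed type constant `base r`. -/
def cpsTy (r : ℕ) : Ty → Ty
  | .base q => .base q
  | .arr σ τ => .arr (.arr (cpsTy r τ) (.base r)) (.arr (cpsTy r σ) (.base r))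
  | .box σ => .box (cpsTy r σ)

mutual
  /-- `Ψ`, the CPS transformation on values:  `Ψ(λx.M) = λk.λx.⟦M⟧k`,
  `Ψ(box x⃗ be U⃗ in V) = box x⃗ be Ψ(U⃗) in Ψ(V)`.  (On non-values it is junk.) -/
  def cpsV : Tm → Tm
    | .const c => .const c
    | .var x => .var x
    | .lam x M =>
        let M' := cps M
        let k := fresh (fv M' ∪ {x})
        .lam k (.lam x (.app M' (.var k)))
    | .box xs Us V => .box xs (cpsVList Us) (cpsV V)
    | .app M N => .app M N
  def cpsVList : List Tm → List Tm
    | [] => []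
    | U :: Us => cpsV U :: cpsVList Us
  /-- The CPS transformation `⟦−⟧` on terms:  `⟦V⟧ = λk.kΨ(V)`,
  `⟦MN⟧ = λk.⟦M⟧(λy.⟦N⟧(yk))`, and
  `⟦box x⃗ be M⃗ in V⟧ = λk.⟦M₁⟧(λy₁.⋯⟦Mₙ⟧(λyₙ. k(box x⃗ be y⃗ in Ψ(V)))⋯)`. -/
  def cps : Tm → Tm
    | .const c =>
        let k := fresh ∅
        .lam k (.app (.var k) (.const c))
    | .var x =>
        let k := fresh {x}
        .lam k (.app (.var k) (.var x))
    | .lam x M =>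
        let M' := cps M
        let b := fresh (fv M' ∪ {x})
        .lam b (.app (.var b) (.lam (b + 1) (.lam x (.app M' (.var (b + 1))))))
    | .app M N =>
        let M' := cps M
        let N' := cps N
        let b := fresh (fv M' ∪ fv N')
        .lam b (.app M' (.lam (b + 1) (.app N' (.app (.var (b + 1)) (.var b)))))
    | .box xs Ms V =>
        let Ms' := cpsList Ms
        let V' := cpsV V
        let b := fresh (fvList Ms' ∪ fv V' ∪ xs.toFinset)
        let ys := (List.range Ms'.length).map fun i => b + 1 + i
        .lam b (appCont Ms' ys (.app (.var b) (.box xs (ys.map Tm.var) V')))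
  def cpsList : List Tm → List Tm
    | [] => []
    | M :: Ms => cps M :: cpsList Ms
end

/-!
`⟦M⟧ : (⟦τ⟧ ⊃ R) ⊃ R` and, for values, `Ψ(M) : ⟦τ⟧` are proved together by induction on the
restricted term: `Ψ(λx.M)` is built from `⟦M⟧`, and `⟦box x⃗ be M⃗ in V⟧` from the `⟦Mᵢ⟧` and
`Ψ(V)`, where the restriction makes `V` a value so that the hypothesis on `Ψ` applies. Each case is
then a direct derivation; the continuation variables are fresh, so adding them to a context is
weakening.
-/

local infixr:25 " ⇒ " => Ty.arr

theorem _root_.List.Forall₂.imp_of_mem {α β : Type*} {R S : α → β → Prop} {l₁ : List α}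
    {l₂ : List β} (h : List.Forall₂ R l₁ l₂) (H : ∀ a ∈ l₁, ∀ b, R a b → S a b) :
    List.Forall₂ S l₁ l₂ :=
  ((List.forall₂_and_left l₁ l₂).2 ⟨H, h⟩).imp fun _ b h => h.1 b h.2

theorem fresh_add_notMem (s : Finset ℕ) (j : ℕ) : fresh s + j ∉ s := fun h => by
  have := Finset.le_sup (f := id) h
  simp only [fresh, id] at this
  omega

theorem mem_fvList {x : ℕ} {Ns : List Tm} : x ∈ fvList Ns ↔ ∃ N ∈ Ns, x ∈ fv N := by
  induction Ns with
  | nil => simp [fvList]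
  | cons N Ns ih => simp [fvList, ih]

theorem cpsList_eq_map (Ms : List Tm) : cpsList Ms = Ms.map cps := by
  induction Ms with
  | nil => rfl
  | cons M Ms ih => simp [cpsList, ih]

theorem cpsVList_eq_map (Ms : List Tm) : cpsVList Ms = Ms.map cpsV := by
  induction Ms with
  | nil => rfl
  | cons M Ms ih => simp [cpsVList, ih]

theorem Lookup.map_snd {Γ : Ctx} {x : ℕ} {τ : Ty} (f : Ty → Ty) (h : Lookup Γ x τ) :
    Lookup (Γ.map fun e => (e.1, f e.2)) x (f τ) := by
  induction h with
  | here => exact .here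
  | there hne _ ih => exact .there hne ih

theorem Lookup.append_left {Γ : Ctx} {x : ℕ} {τ : Ty} (Δ : Ctx) (h : Lookup Γ x τ)
    (hΔ : ∀ p ∈ Δ, x ≠ p.1) : Lookup (Δ ++ Γ) x τ := by
  induction Δ with
  | nil => exact h
  | cons p Δ ih => exact .there (hΔ p (by simp)) (ih fun q hq => hΔ q (by simp [hq]))

theorem forall₂_lookup_reverse_zip_append (Γ : Ctx) {ys : List ℕ} {σs : List Ty}
    (hnd : ys.Nodup) (hlen : ys.length = σs.length) :
    List.Forall₂ (fun y σ => Lookup ((ys.zip σs).reverse ++ Γ) y σ) ys σs := by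
  induction ys generalizing σs Γ with
  | nil => cases σs with
    | nil => exact .nil
    | cons _ _ => simp at hlen
  | cons y ys ih => cases σs with
    | nil => simp at hlen
    | cons σ σs =>
      rw [List.nodup_cons] at hnd
      have hrev : ((y :: ys).zip (σ :: σs)).reverse ++ Γ = (ys.zip σs).reverse ++ (y, σ) :: Γ := by
        simp
      rw [hrev]
      refine .cons (Lookup.here.append_left _ fun p hp hyp => hnd.1 ?_)
        (ih _ hnd.2 (by simpa using hlen))
      exact hyp ▸ (List.of_mem_zip (List.mem_reverse.1 hp)).1

section Typing

variable {ct : ℕ → Ty}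

theorem HasType.mono_ctx {Γ Γ' : Ctx} {M : Tm} {τ : Ty} (h : HasType ct Γ M τ)
    (hΓ : ∀ x ∈ fv M, ∀ σ, Lookup Γ x σ → Lookup Γ' x σ) : HasType ct Γ' M τ := by
  induction h generalizing Γ' with
  | const => exact .const
  | var hl => exact .var (hΓ _ (by simp [fv]) _ hl)
  | lam _ ih =>
    refine .lam (ih fun y hy σ hl => ?_)
    cases hl with
    | here => exact .here
    | there hne hl => exact .there hne (hΓ y (by simp [fv, hy, hne]) σ hl)
  | app _ _ ihM ihN =>
    exact .app (ihM fun x hx => hΓ x (by simp [fv, hx])) (ihN fun x hx => hΓ x (by simp [fv, hx]))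
  | box hlen hbody hNs _ _ ihty =>
    refine .box hlen hbody hNs fun i hN hσ => ihty i hN hσ fun x hx => hΓ x ?_
    simp only [fv, mem_fvList]
    exact ⟨_, List.get_mem _ _, hx⟩

theorem HasType.weaken {Γ : Ctx} {M : Tm} {τ : Ty} {y : ℕ} (σ : Ty) (h : HasType ct Γ M τ)
    (hy : y ∉ fv M) : HasType ct ((y, σ) :: Γ) M τ :=
  h.mono_ctx fun _ hx _ hl => .there (fun h => hy (h ▸ hx)) hl

theorem HasType.weaken_second {Γ : Ctx} {M : Tm} {τ : Ty} {x y : ℕ} {σ : Ty} (ρ : Ty)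
    (h : HasType ct ((x, σ) :: Γ) M τ) (hy : y ∉ fv M) :
    HasType ct ((x, σ) :: (y, ρ) :: Γ) M τ := by
  refine h.mono_ctx fun z hz _ hl => ?_
  cases hl with
  | here => exact .here
  | there hne hl => exact .there hne (.there (fun h => hy (h ▸ hz)) hl)

theorem HasType.box_of_forall₂ {Γ : Ctx} {xs : List ℕ} {σs : List Ty} {Ns : List Tm} {M : Tm}
    {τ : Ty} (hlen : xs.length = σs.length) (hM : HasType ct (xs.zip σs).reverse M τ)
    (hNs : List.Forall₂ (fun N σ => HasType ct Γ N (.box σ)) Ns σs) :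
    HasType ct Γ (.box xs Ns M) (.box τ) :=
  .box hlen hM hNs.length_eq hNs.get

theorem hasType_appCont {R : Ty} {Γ : Ctx} {Ns : List Tm} {ys : List ℕ} {σs : List Ty} {B : Tm}
    (hNs : List.Forall₂ (fun N σ => HasType ct Γ N ((σ ⇒ R) ⇒ R)) Ns σs)
    (hlen : ys.length = σs.length) (hys : ∀ y ∈ ys, y ∉ fvList Ns)
    (hB : HasType ct ((ys.zip σs).reverse ++ Γ) B R) :
    HasType ct Γ (appCont Ns ys B) R := by
  induction Ns generalizing σs ys Γ with
  | nil => cases hNs; cases ys <;> simpa [appCont] using hB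
  | cons N Ns ih =>
    cases hNs with | cons hN hNs =>
    obtain _ | ⟨y, ys⟩ := ys
    · simp at hlen
    simp only [List.mem_cons, forall_eq_or_imp, fvList, Finset.mem_union, not_or] at hys
    refine .app hN (.lam (ih ?_ (by simpa using hlen) (fun z hz => (hys.2 z hz).2)
      (by simpa using hB)))
    exact hNs.imp_of_mem fun N' hN' _ h => h.weaken _ fun hy => hys.1.2 (mem_fvList.2 ⟨N', hN', hy⟩)

theorem hasType_lam_var_app {R σ : Ty} {Γ : Ctx} {k : ℕ} {V : Tm} (hk : k ∉ fv V)
    (hV : HasType ct Γ V σ) : HasType ct Γ (.lam k (.app (.var k) V)) ((σ ⇒ R) ⇒ R) :=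
  .lam (.app (.var .here) (hV.weaken _ hk))

theorem hasType_lam_lam_app_var {R σ τ : Ty} {Γ : Ctx} {k x : ℕ} {M : Tm} (hk : k ∉ fv M)
    (hkx : k ≠ x) (hM : HasType ct ((x, σ) :: Γ) M ((τ ⇒ R) ⇒ R)) :
    HasType ct Γ (.lam k (.lam x (.app M (.var k)))) ((τ ⇒ R) ⇒ σ ⇒ R) :=
  .lam (.lam (.app (hM.weaken_second _ hk) (.var (.there hkx .here))))

variable {R σ τ : Ty} {Γ : Ctx}

theorem hasType_cpsV_lam {x : ℕ} {M : Tm} (hM : HasType ct ((x, σ) :: Γ) (cps M) ((τ ⇒ R) ⇒ R)) :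
    HasType ct Γ (cpsV (.lam x M)) ((τ ⇒ R) ⇒ σ ⇒ R) := by
  have hk := fresh_add_notMem (fv (cps M) ∪ {x}) 0
  simp only [add_zero, Finset.mem_union, Finset.mem_singleton, not_or] at hk
  exact hasType_lam_lam_app_var hk.1 hk.2 hM

theorem hasType_cps_lam {x : ℕ} {M : Tm} (hM : HasType ct ((x, σ) :: Γ) (cps M) ((τ ⇒ R) ⇒ R)) :
    HasType ct Γ (cps (.lam x M)) ((((τ ⇒ R) ⇒ σ ⇒ R) ⇒ R) ⇒ R) := by
  have hb := fresh_add_notMem (fv (cps M) ∪ {x}) 0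
  have hb₁ := fresh_add_notMem (fv (cps M) ∪ {x}) 1
  simp only [add_zero, Finset.mem_union, Finset.mem_singleton, not_or] at hb hb₁
  refine hasType_lam_var_app ?_ (hasType_lam_lam_app_var hb₁.1 hb₁.2 hM)
  simp only [fv, Finset.mem_sdiff, Finset.mem_union, Finset.mem_singleton]
  tauto

theorem hasType_cps_app {M N : Tm} (hM : HasType ct Γ (cps M) ((((τ ⇒ R) ⇒ σ ⇒ R) ⇒ R) ⇒ R))
    (hN : HasType ct Γ (cps N) ((σ ⇒ R) ⇒ R)) :
    HasType ct Γ (cps (.app M N)) ((τ ⇒ R) ⇒ R) := by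
  have hb := fresh_add_notMem (fv (cps M) ∪ fv (cps N)) 0
  have hb₁ := fresh_add_notMem (fv (cps M) ∪ fv (cps N)) 1
  simp only [add_zero, Finset.mem_union, not_or] at hb hb₁
  exact .lam (.app (hM.weaken _ hb.1) (.lam (.app ((hN.weaken _ hb.2).weaken _ hb₁.2)
    (.app (.var .here) (.var (.there (by omega) .here))))))

theorem hasType_cps_box {xs : List ℕ} {σs : List Ty} {Ns : List Tm} {V : Tm}
    (hlen : xs.length = σs.length)
    (hNs : List.Forall₂ (fun N σ => HasType ct Γ (cps N) ((.box σ ⇒ R) ⇒ R)) Ns σs)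
    (hV : HasType ct (xs.zip σs).reverse (cpsV V) τ) :
    HasType ct Γ (cps (.box xs Ns V)) ((.box τ ⇒ R) ⇒ R) := by
  set b := fresh (fvList (cpsList Ns) ∪ fv (cpsV V) ∪ xs.toFinset)
  set ys := (List.range (cpsList Ns).length).map fun i => b + 1 + i with hys
  have hb : ∀ j, b + j ∉ fvList (cpsList Ns) := fun j h =>
    fresh_add_notMem _ j (Finset.mem_union_left _ (Finset.mem_union_left _ h))
  have hys_fresh : ∀ y ∈ ys, y ∉ fvList (cpsList Ns) := by
    simp only [hys, List.mem_map, List.mem_range, forall_exists_index, and_imp]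
    rintro _ i _ rfl
    simpa [add_assoc] using hb (1 + i)
  have hys_len : ys.length = (σs.map Ty.box).length := by
    simp [hys, cpsList_eq_map, hNs.length_eq]
  have hys_nodup : ys.Nodup := (List.nodup_range).map fun _ _ h => by omega
  have hb_ys : ∀ p ∈ (ys.zip (σs.map Ty.box)).reverse, b ≠ p.1 := fun p hp hbp => by
    have := (List.of_mem_zip (List.mem_reverse.1 hp)).1
    simp only [hys, List.mem_map] at this
    omega
  show HasType ct Γ (.lam b (appCont (cpsList Ns) ys (.app (.var b)
    (.box xs (ys.map Tm.var) (cpsV V))))) _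
  refine .lam (hasType_appCont (σs := σs.map Ty.box) ?_ hys_len hys_fresh
    (.app (.var (Lookup.here.append_left _ hb_ys)) (HasType.box_of_forall₂ hlen hV ?_)))
  · rw [cpsList_eq_map, List.forall₂_map_left_iff, List.forall₂_map_right_iff]
    refine hNs.imp_of_mem fun N hN _ h => h.weaken _ fun hbN => hb 0 ?_
    simpa [cpsList_eq_map, mem_fvList] using ⟨N, hN, hbN⟩
  · have hlookup := forall₂_lookup_reverse_zip_append ((b, .box τ ⇒ R) :: Γ) hys_nodup hys_len
    rw [List.forall₂_map_right_iff] at hlookup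
    rw [List.forall₂_map_left_iff]
    exact hlookup.imp fun _ _ h => .var h

end Typing

def cpsCtx (r : ℕ) (Γ : Ctx) : Ctx := Γ.map fun e => (e.1, cpsTy r e.2)

theorem cpsCtx_reverse_zip (r : ℕ) (xs : List ℕ) (σs : List Ty) :
    cpsCtx r (xs.zip σs).reverse = (xs.zip (σs.map (cpsTy r))).reverse := by
  rw [cpsCtx, List.map_reverse, List.zip_map_right]
  rfl

theorem hasType_cps_and_cpsV {ct : ℕ → Ty} {r : ℕ} {M : Tm} (hres : Restricted M) {Γ : Ctx}
    {τ : Ty} (hM : HasType ct Γ M τ) :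
    HasType (fun c => cpsTy r (ct c)) (cpsCtx r Γ) (cps M) ((cpsTy r τ ⇒ .base r) ⇒ .base r) ∧
      (IsValue M → HasType (fun c => cpsTy r (ct c)) (cpsCtx r Γ) (cpsV M) (cpsTy r τ)) := by
  induction hres generalizing Γ τ with
  | const c =>
    cases hM
    exact ⟨hasType_lam_var_app (by simp [fv]) .const, fun _ => .const⟩
  | var x =>
    cases hM with | var hl =>
    have hk : fresh {x} ∉ fv (.var x) := by simpa [fv] using fresh_add_notMem {x} 0
    exact ⟨hasType_lam_var_app hk (.var (hl.map_snd _)), fun _ => .var (hl.map_snd _)⟩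
  | lam _ ih =>
    cases hM with | lam hM =>
    have hcps := (ih hM).1
    exact ⟨hasType_cps_lam hcps, fun _ => hasType_cpsV_lam hcps⟩
  | app _ _ ihM ihN =>
    cases hM with | app hM hN =>
    exact ⟨hasType_cps_app (ihM hM).1 (ihN hN).1, fun h => nomatch h⟩
  | box _ _ hV ihNs ihV =>
    cases hM with | box hlen hbody hlenN hty =>
    have hNs : List.Forall₂ (fun N σ => HasType ct Γ N (.box σ)) _ _ :=
      List.forall₂_iff_get.2 ⟨hlenN, hty⟩
    have hV' := (ihV hbody).2 hV
    rw [cpsCtx_reverse_zip] at hV'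
    refine ⟨hasType_cps_box (by simpa using hlen) ?_ hV', fun hval => ?_⟩
    · rw [List.forall₂_map_right_iff]
      exact hNs.imp_of_mem fun N hN _ h => (ihNs N hN h).1
    · cases hval with | box hvals =>
      refine HasType.box_of_forall₂ (by simpa using hlen) hV' ?_
      rw [cpsVList_eq_map, List.forall₂_map_left_iff, List.forall₂_map_right_iff]
      exact hNs.imp_of_mem fun N hN _ h => (ihNs N hN h).2 (hvals N hN)

/-- **Type preservation of the CPS transformation**: if
`x₁:σ₁,…,xₙ:σₙ ⊢ M : τ` is derivable in the call-by-value λ□-calculus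
(terms restricted so box bodies are values), then
`x₁:⟦σ₁⟧,…,xₙ:⟦σₙ⟧ ⊢ ⟦M⟧ : (⟦τ⟧⊃R)⊃R` is derivable in the call-by-name
λ□-calculus. -/
theorem cps_type_preservation (ct : ℕ → Ty) (r : ℕ) (Γ : Ctx) (M : Tm) (τ : Ty)
    (hres : Restricted M) (hM : HasType ct Γ M τ) :
    HasType (fun c => cpsTy r (ct c)) (Γ.map fun e => (e.1, cpsTy r e.2))
      (cps M) (.arr (.arr (cpsTy r τ) (.base r)) (.base r)) :=
  (hasType_cps_and_cpsV hres hM).1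

end LamBox
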